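/- Let G = [g₁, …, gₙ] be a finitely generated transcendental semigroup such that for every g ∈ G all stable domains (connected components) of the Fatou set F(g) are bounded. Then F(G) contains no asymptotic value of G, where an asymptotic value of G is an asymptotic value of some g ∈ G. -/

import Mathlib

open Set Filter Topology

noncomputable section

/-- A transcendental entire function: entire (differentiable on all of `ℂ`)
and not a polynomial. -/
def TranscendentalEntire (f : ℂ → ℂ) : Prop :=
  Differentiable ℂ f ∧ ¬ ∃ p : Polynomial ℂ, ∀ z, f z = p.eval z

/-- A family `𝓕` of entire functions is normal on a set `U`: every sequence in `𝓕`
has a subsequence which either converges locally uniformly on `U` (to a holomorphic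
limit), or diverges locally uniformly to `∞` on `U` (i.e. converges to the constant
`∞` locally uniformly with respect to the spherical metric). -/
def NormalOn (F : Set (ℂ → ℂ)) (U : Set ℂ) : Prop :=
  ∀ s : ℕ → ℂ → ℂ, (∀ n, s n ∈ F) →
    ∃ φ : ℕ → ℕ, StrictMono φ ∧
      ((∃ h : ℂ → ℂ, TendstoLocallyUniformlyOn (fun n => s (φ n)) h atTop U) ∨
        (∀ K, K ⊆ U → IsCompact K → ∀ M : ℝ,
          ∀ᶠ n in atTop, ∀ z ∈ K, M ≤ ‖s (φ n) z‖))

/-- The Fatou set of a family of entire functions: the largest open subset of `ℂ`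
on which the family is normal. -/
def fatou (F : Set (ℂ → ℂ)) : Set ℂ :=
  {z | ∃ U : Set ℂ, IsOpen U ∧ z ∈ U ∧ NormalOn F U}

/-- The classical Fatou set of a single entire function: the Fatou set of the
family of its iterates. -/
def fatouFn (f : ℂ → ℂ) : Set ℂ :=
  fatou {g | ∃ n : ℕ, 0 < n ∧ g = f^[n]}

/-- `G` is a transcendental semigroup: a nonempty set of transcendental entire
functions closed under composition. -/
def IsTransSemigroup (G : Set (ℂ → ℂ)) : Prop :=
  G.Nonempty ∧ (∀ f ∈ G, ∀ g ∈ G, f ∘ g ∈ G) ∧ ∀ f ∈ G, TranscendentalEntire f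

/-- Membership in the semigroup (under composition) generated by `S`. -/
inductive InSemigroup (S : Set (ℂ → ℂ)) : (ℂ → ℂ) → Prop
  | base {f : ℂ → ℂ} : f ∈ S → InSemigroup S f
  | comp {f g : ℂ → ℂ} : InSemigroup S f → InSemigroup S g → InSemigroup S (f ∘ g)

/-- The semigroup (under composition) generated by `S`. -/
def semigroupGen (S : Set (ℂ → ℂ)) : Set (ℂ → ℂ) := {f | InSemigroup S f}

/-- `U` is a connected component of `S`. -/
def IsComponentOf (U S : Set ℂ) : Prop := ∃ z ∈ S, U = connectedComponentIn S z

/-- A plane domain is simply connected iff its complement in the Riemann sphere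
(the one-point compactification of `ℂ`) is connected. -/
def SimplyConnectedDomain (U : Set ℂ) : Prop :=
  IsConnected ((fun z : ℂ => (z : OnePoint ℂ)) '' U)ᶜ

/-- A multiply connected domain: not simply connected. -/
def MultiplyConnectedDomain (U : Set ℂ) : Prop := ¬ SimplyConnectedDomain U

/-- A plane domain is doubly connected iff its complement in the Riemann sphere
has exactly two connected components. -/
def DoublyConnectedDomain (U : Set ℂ) : Prop :=
  ∃ x ∈ ((fun z : ℂ => (z : OnePoint ℂ)) '' U)ᶜ,
    ∃ y ∈ ((fun z : ℂ => (z : OnePoint ℂ)) '' U)ᶜ,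
      connectedComponentIn (((fun z : ℂ => (z : OnePoint ℂ)) '' U)ᶜ) x ≠
        connectedComponentIn (((fun z : ℂ => (z : OnePoint ℂ)) '' U)ᶜ) y ∧
      ∀ z ∈ ((fun z : ℂ => (z : OnePoint ℂ)) '' U)ᶜ,
        connectedComponentIn (((fun z : ℂ => (z : OnePoint ℂ)) '' U)ᶜ) z =
            connectedComponentIn (((fun z : ℂ => (z : OnePoint ℂ)) '' U)ᶜ) x ∨
          connectedComponentIn (((fun z : ℂ => (z : OnePoint ℂ)) '' U)ᶜ) z =
            connectedComponentIn (((fun z : ℂ => (z : OnePoint ℂ)) '' U)ᶜ) y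

/-- The subsemigroup `Γ̃_U` of `G`: the subsemigroup generated by those `g ∈ G`
such that the classical Fatou set `F(g)` has a multiply connected component
containing `U`. -/
def tildeGamma (G : Set (ℂ → ℂ)) (U : Set ℂ) : Set (ℂ → ℂ) :=
  semigroupGen {g | g ∈ G ∧ ∃ V, IsComponentOf V (fatouFn g) ∧
    MultiplyConnectedDomain V ∧ U ⊆ V}

/-- `w` is a critical value of `f`: the image of a point where `f'` vanishes. -/
def CriticalValue (f : ℂ → ℂ) (w : ℂ) : Prop := ∃ z, deriv f z = 0 ∧ f z = w

/-- `w` is an asymptotic value of `f`: there is a curve going to `∞` along which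
`f` tends to `w`. -/
def AsymptoticValue (f : ℂ → ℂ) (w : ℂ) : Prop :=
  ∃ γ : ℝ → ℂ, ContinuousOn γ (Ici 0) ∧
    Tendsto (fun t => ‖γ t‖) atTop atTop ∧
    Tendsto (fun t => f (γ t)) atTop (nhds w)

/-- The set `Sing(f⁻¹)` of singular values of `f`: critical values together with
asymptotic values. -/
def SingInv (f : ℂ → ℂ) : Set ℂ := {w | CriticalValue f w ∨ AsymptoticValue f w}

/-- `f` is of bounded type (class `𝔅`): transcendental entire and `Sing(f⁻¹)` is bounded. -/
def BoundedType (f : ℂ → ℂ) : Prop :=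
  TranscendentalEntire f ∧ Bornology.IsBounded (SingInv f)

/-- `f` is of finite type: transcendental entire and `Sing(f⁻¹)` is finite. -/
def FiniteType (f : ℂ → ℂ) : Prop :=
  TranscendentalEntire f ∧ (SingInv f).Finite

/-- The stabilizer `G_U` of a component `U` of `F(G)`: those `g ∈ G` for which the
component `U_g` of `F(G)` containing `g(U)` is `U` itself. -/
def stab (G : Set (ℂ → ℂ)) (U : Set ℂ) : Set (ℂ → ℂ) :=
  {g | g ∈ G ∧ ∃ z ∈ U, connectedComponentIn (fatou G) (g z) = U}

/-!
`F(G) ⊆ F(h)` for every `h ∈ G`. If `w ∈ F(G)` were an asymptotic value of `h` along a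
curve `γ → ∞`, the tail of `γ` would be mapped by `h` into `F(h)`, hence lie in `F(h)` by
backward invariance. Being connected, that tail lies in a single stable domain of `h`,
which is bounded: impossible for a curve tending to `∞`.
-/

open Bornology

/-- The dichotomy required of a subsequence in `NormalOn`. -/
def ConvergesOrDivergesLocallyUniformlyOn (s : ℕ → ℂ → ℂ) (U : Set ℂ) : Prop :=
  (∃ h : ℂ → ℂ, TendstoLocallyUniformlyOn s h atTop U) ∨
    (∀ K, K ⊆ U → IsCompact K → ∀ M : ℝ, ∀ᶠ n in atTop, ∀ z ∈ K, M ≤ ‖s n z‖)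

lemma ConvergesOrDivergesLocallyUniformlyOn.comp_right {s : ℕ → ℂ → ℂ} {U : Set ℂ}
    (hs : ConvergesOrDivergesLocallyUniformlyOn s U) {f : ℂ → ℂ} (hf : Continuous f) :
    ConvergesOrDivergesLocallyUniformlyOn (fun n => s n ∘ f) (f ⁻¹' U) := by
  rcases hs with ⟨h, hconv⟩ | hdiv
  · exact Or.inl ⟨h ∘ f, hconv.comp f (mapsTo_preimage f U) hf.continuousOn⟩
  · refine Or.inr fun K hKU hK M => ?_
    filter_upwards [hdiv (f '' K) (image_subset_iff.mpr hKU) (hK.image hf) M] with n hn z hz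
    exact hn (f z) (mem_image_of_mem f hz)

section NormalOn

variable {F F' : Set (ℂ → ℂ)} {U : Set ℂ}

lemma NormalOn.mono (hF : NormalOn F U) (hF' : F' ⊆ F) : NormalOn F' U :=
  fun s hs => hF s fun n => hF' (hs n)

lemma normalOn_singleton (f : ℂ → ℂ) (U : Set ℂ) : NormalOn {f} U := by
  intro s hs
  have hs_const : s = fun _ => f := funext hs
  subst hs_const
  have hunif : TendstoUniformlyOn (fun _ : ℕ => f) f atTop U :=
    fun _ hu => Eventually.of_forall fun _ _ _ => refl_mem_uniformity hu
  exact ⟨id, strictMono_id, Or.inl ⟨f, hunif.tendstoLocallyUniformlyOn⟩⟩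

lemma NormalOn.exists_subseq_of_infinite (hF : NormalOn F U) {s : ℕ → ℂ → ℂ}
    (hs : {n | s n ∈ F}.Infinite) :
    ∃ φ : ℕ → ℕ, StrictMono φ ∧ ConvergesOrDivergesLocallyUniformlyOn (s ∘ φ) U := by
  obtain ⟨ψ, hψ, hconv⟩ :=
    hF (s ∘ Nat.nth (s · ∈ F)) fun n => Nat.nth_mem_of_infinite hs n
  exact ⟨Nat.nth (s · ∈ F) ∘ ψ, (Nat.nth_strictMono hs).comp hψ, hconv⟩

lemma NormalOn.union (hF : NormalOn F U) (hF' : NormalOn F' U) : NormalOn (F ∪ F') U := by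
  intro s hs
  by_cases hinf : {n | s n ∈ F}.Infinite
  · exact hF.exists_subseq_of_infinite hinf
  · refine hF'.exists_subseq_of_infinite fun hfin => ?_
    have hcover : {n | s n ∈ F} ∪ {n | s n ∈ F'} = univ := eq_univ_of_forall hs
    exact infinite_univ (hcover ▸ (not_infinite.mp hinf).union hfin)

lemma NormalOn.image_comp_right (hF : NormalOn F U) {f : ℂ → ℂ} (hf : Continuous f) :
    NormalOn ((· ∘ f) '' F) (f ⁻¹' U) := by
  intro s hs
  choose t htF hts using hs
  obtain ⟨φ, hφ, hconv⟩ := hF t htF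
  have hsφ : s ∘ φ = fun n => t (φ n) ∘ f := funext fun n => (hts (φ n)).symm
  refine ⟨φ, hφ, (?_ : ConvergesOrDivergesLocallyUniformlyOn (s ∘ φ) (f ⁻¹' U))⟩
  rw [hsφ]
  exact ConvergesOrDivergesLocallyUniformlyOn.comp_right hconv hf

end NormalOn

lemma isOpen_fatou (F : Set (ℂ → ℂ)) : IsOpen (fatou F) :=
  isOpen_iff_forall_mem_open.mpr fun _ ⟨U, hUo, hzU, hN⟩ =>
    ⟨U, fun _ hy => ⟨U, hUo, hy, hN⟩, hUo, hzU⟩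

lemma fatou_anti {F F' : Set (ℂ → ℂ)} (hF' : F' ⊆ F) : fatou F ⊆ fatou F' :=
  fun _ ⟨U, hUo, hzU, hN⟩ => ⟨U, hUo, hzU, hN.mono hF'⟩

lemma iterates_subset_union_image_comp (f : ℂ → ℂ) :
    {g | ∃ n : ℕ, 0 < n ∧ g = f^[n]} ⊆
      {f} ∪ (· ∘ f) '' {g | ∃ n : ℕ, 0 < n ∧ g = f^[n]} := by
  rintro _ ⟨_ | _ | n, hn, rfl⟩
  · omega
  · exact mem_union_left _ rfl
  · exact mem_union_right _ ⟨f^[n + 1], ⟨n + 1, n.succ_pos, rfl⟩, (Function.iterate_succ f _).symm⟩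

lemma preimage_fatouFn_subset {f : ℂ → ℂ} (hf : Continuous f) : f ⁻¹' fatouFn f ⊆ fatouFn f := by
  rintro z ⟨U, hUo, hfzU, hN⟩
  refine ⟨f ⁻¹' U, hUo.preimage hf, hfzU, ?_⟩
  exact ((normalOn_singleton f _).union (hN.image_comp_right hf)).mono
    (iterates_subset_union_image_comp f)

namespace InSemigroup

variable {S : Set (ℂ → ℂ)}

lemma continuous (hS : ∀ f ∈ S, Continuous f) {h : ℂ → ℂ} (hh : InSemigroup S h) :
    Continuous h := by
  induction hh with
  | base hf => exact hS _ hf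
  | comp _ _ ihf ihg => exact ihf.comp ihg

lemma iterate {h : ℂ → ℂ} (hh : InSemigroup S h) {m : ℕ} (hm : 0 < m) :
    InSemigroup S h^[m] := by
  induction m, hm using Nat.le_induction with
  | base => simpa only [Function.iterate_one] using hh
  | succ m _ ih => simpa only [Function.iterate_succ'] using hh.comp ih

end InSemigroup

lemma fatou_semigroupGen_subset_fatouFn {S : Set (ℂ → ℂ)} {h : ℂ → ℂ}
    (hh : h ∈ semigroupGen S) : fatou (semigroupGen S) ⊆ fatouFn h :=
  fatou_anti fun _ ⟨_, hm, hg⟩ => hg ▸ InSemigroup.iterate hh hm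

/-- The tail of the curve is connected, so it would lie in one bounded component. -/
lemma not_eventually_mem_of_tendsto_cobounded {X : Type*} [TopologicalSpace X] [Bornology X]
    {S : Set X} (hS : ∀ x ∈ S, IsBounded (connectedComponentIn S x)) {γ : ℝ → X}
    (hγ : ContinuousOn γ (Ici 0)) (hγ_tendsto : Tendsto γ atTop (cobounded X)) :
    ¬ ∀ᶠ t in atTop, γ t ∈ S := by
  intro hev
  obtain ⟨T, hT⟩ := eventually_atTop.mp hev
  set T' := max T 0
  have htail_conn : IsPreconnected (γ '' Ici T') :=
    isPreconnected_Ici.image γ (hγ.mono (Ici_subset_Ici.mpr (le_max_right T 0)))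
  have htail : γ '' Ici T' ⊆ connectedComponentIn S (γ T') :=
    htail_conn.subset_connectedComponentIn (mem_image_of_mem γ self_mem_Ici)
      (image_subset_iff.mpr fun t ht => hT t (le_trans (le_max_left T 0) ht))
  have hbounded := (hS _ (hT T' (le_max_left T 0))).subset htail
  obtain ⟨t, hout, ht⟩ :=
    ((hγ_tendsto.eventually (isBounded_def.mp hbounded)).and (eventually_ge_atTop T')).exists
  exact hout (mem_image_of_mem γ ht)

theorem stmt11_general (n : ℕ) (g : Fin n → ℂ → ℂ)
    (htr : ∀ i, TranscendentalEntire (g i))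
    (hbd : ∀ h ∈ semigroupGen (Set.range g),
      ∀ V, IsComponentOf V (fatouFn h) → Bornology.IsBounded V) :
    ∀ w ∈ fatou (semigroupGen (Set.range g)),
      ¬ ∃ h ∈ semigroupGen (Set.range g), AsymptoticValue h w := by
  rintro w hw ⟨h, hhG, γ, hγ, hγ_norm, hγw⟩
  have hh : Continuous h :=
    InSemigroup.continuous (by rintro _ ⟨i, rfl⟩; exact (htr i).1.continuous) hhG
  have hwF : fatouFn h ∈ 𝓝 w :=
    (isOpen_fatou _).mem_nhds (fatou_semigroupGen_subset_fatouFn hhG hw)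
  have htail : ∀ᶠ t in atTop, γ t ∈ fatouFn h :=
    (hγw.eventually hwF).mono fun _ ht => preimage_fatouFn_subset hh ht
  exact not_eventually_mem_of_tendsto_cobounded (fun x hx => hbd h hhG _ ⟨x, hx, rfl⟩) hγ
    (tendsto_norm_atTop_iff_cobounded.mp hγ_norm) htail

/-- if `G = [g₁, …, gₙ]` is a finitely generated transcendental
semigroup such that for every `g ∈ G` all stable domains (components of `F(g)`)
are bounded, then `F(G)` contains no asymptotic value of any `g ∈ G`. -/
theorem stmt11 (n : ℕ) (hn : 0 < n) (g : Fin n → ℂ → ℂ)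
    (htr : ∀ i, TranscendentalEntire (g i))
    (hbd : ∀ h ∈ semigroupGen (Set.range g),
      ∀ V, IsComponentOf V (fatouFn h) → Bornology.IsBounded V) :
    ∀ w ∈ fatou (semigroupGen (Set.range g)),
      ¬ ∃ h ∈ semigroupGen (Set.range g), AsymptoticValue h w :=
  stmt11_general n g htr hbd
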